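/- Discrete weighted estimate (Lemma 4.7, k = 0 case): let Ω be partitioned into measurable pieces {Δ}, let ℓ ≥ 0 be affine on each tetrahedron Δ and let ℓ_h be the piecewise constant function equal to max_Δ ℓ on each Δ. Then for every piecewise constant vector function u, ‖ℓ_h u‖_{L²} ≤ 2 ‖√(ℓ ℓ_h) u‖_{L²}, i.e. ∫_Ω ℓ_h² |u|² ≤ 4 ∫_Ω ℓ ℓ_h |u|². -/

import Mathlib

/-!
Let `x₀` maximise the affine function `g ≥ 0` on a convex compact `s ⊆ E`, with maximum `m`; let
`n = dim E` and `H_t` the homothety of ratio `t ∈ (0, 1)` about `x₀`. Then `H_t s ⊆ s` and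
`g ∘ H_t = (1 - t) m + t g`, so changing variables gives
`t^n (1 - t) m |s| + t^(n+1) ∫_s g ≤ ∫_s g`. Dividing by `1 - t` and letting `t → 1` yields
`m |s| ≤ (n + 1) ∫_s g`, i.e. `∫_Δ ℓ ≥ ℓ_max |Δ| / 4` on a tetrahedron. Since `ℓ_h` and `u` are
constant on each piece, the estimate on a piece is this inequality times `ℓ_max |c|²`, and
summing over the pieces gives the theorem.
-/

open MeasureTheory Module
open scoped RealInnerProductSpace

theorem Convex.image_homothety_subset {E : Type*} [AddCommGroup E] [Module ℝ E] {s : Set E}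
    (hs : Convex ℝ s) {x : E} (hx : x ∈ s) {t : ℝ} (ht : t ∈ Set.Icc 0 1) :
    AffineMap.homothety x t '' s ⊆ s := by
  rintro _ ⟨y, hy, rfl⟩
  rw [AffineMap.homothety_eq_lineMap]
  exact hs.lineMap_mem hx hy ht

section Haar

variable {E : Type*} [NormedAddCommGroup E] [NormedSpace ℝ E] [FiniteDimensional ℝ E]
  [MeasurableSpace E] [BorelSpace E] (μ : Measure E) [μ.IsAddHaarMeasure]

theorem setIntegral_image_homothety {F : Type*} [NormedAddCommGroup F] [NormedSpace ℝ F]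
    {s : Set E} (hs : MeasurableSet s) (x : E) {t : ℝ} (ht : t ≠ 0) (f : E → F) :
    ∫ y in AffineMap.homothety x t '' s, f y ∂μ
      = |t| ^ finrank ℝ E • ∫ y in s, f (AffineMap.homothety x t y) ∂μ := by
  have hderiv : ∀ y ∈ s, HasFDerivWithinAt (AffineMap.homothety x t)
      (t • ContinuousLinearMap.id ℝ E) s y := fun y _ => by
    have : ⇑(AffineMap.homothety x t) = fun y => t • (y - x) + x := by
      ext y; simp [AffineMap.homothety_apply]
    rw [this]
    exact (((hasFDerivAt_id y).sub_const x).const_smul t).add_const x |>.hasFDerivWithinAt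
  have hinj : Set.InjOn (AffineMap.homothety x t) s :=
    ((AffineEquiv.homothetyUnitsMulHom x (Units.mk0 t ht)).injective).injOn
  rw [integral_image_eq_integral_abs_det_fderiv_smul μ hs hderiv hinj, integral_smul]
  simp [ContinuousLinearMap.det, LinearMap.det_smul, abs_pow]

theorem Convex.pow_mul_le_geom_sum_mul_setIntegral {s : Set E} (hconv : Convex ℝ s)
    (hcomp : IsCompact s) (g : E →ᵃ[ℝ] ℝ) (hg : ∀ x ∈ s, 0 ≤ g x) {m : ℝ}
    (hm : IsGreatest (g '' s) m) {t : ℝ} (ht : t ∈ Set.Ioo 0 1) :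
    t ^ finrank ℝ E * (m * μ.real s)
      ≤ (∑ k ∈ Finset.range (finrank ℝ E + 1), t ^ k) * ∫ x in s, g x ∂μ := by
  obtain ⟨x₀, hx₀, rfl⟩ := hm.1
  set n := finrank ℝ E
  have hgi : IntegrableOn g s μ :=
    g.continuous_of_finiteDimensional.continuousOn.integrableOn_compact hcomp
  have hg_homothety : ∀ y, g (AffineMap.homothety x₀ t y) = (1 - t) * g x₀ + t * g y := by
    intro y
    rw [AffineMap.homothety_eq_lineMap, AffineMap.apply_lineMap, AffineMap.lineMap_apply_module]
    simp only [smul_eq_mul]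
  have himage : ∫ x in AffineMap.homothety x₀ t '' s, g x ∂μ
      = t ^ n * (1 - t) * (g x₀ * μ.real s) + t ^ (n + 1) * ∫ x in s, g x ∂μ := by
    rw [setIntegral_image_homothety μ hcomp.measurableSet x₀ ht.1.ne', abs_of_pos ht.1,
      smul_eq_mul]
    simp_rw [hg_homothety]
    rw [integral_add (integrableOn_const hcomp.measure_lt_top.ne enorm_ne_top).integrable
      (hgi.const_mul t), setIntegral_const, integral_const_mul, smul_eq_mul]
    ring
  have hmono : ∫ x in AffineMap.homothety x₀ t '' s, g x ∂μ ≤ ∫ x in s, g x ∂μ :=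
    setIntegral_mono_set hgi ((ae_restrict_mem hcomp.measurableSet).mono hg)
      (hconv.image_homothety_subset hx₀ (Set.Ioo_subset_Icc_self ht)).eventuallyLE
  refine le_of_mul_le_mul_left ?_ (sub_pos.2 ht.2)
  linear_combination hmono - himage - (∫ x in s, g x ∂μ) * mul_neg_geom_sum t (n + 1)

theorem Convex.mul_measureReal_le_finrank_succ_mul_setIntegral {s : Set E} (hconv : Convex ℝ s)
    (hcomp : IsCompact s) (g : E →ᵃ[ℝ] ℝ) (hg : ∀ x ∈ s, 0 ≤ g x) {m : ℝ}
    (hm : IsGreatest (g '' s) m) :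
    m * μ.real s ≤ (finrank ℝ E + 1) * ∫ x in s, g x ∂μ := by
  have hlim : ∀ f : ℝ → ℝ, Continuous f →
      Filter.Tendsto f (nhdsWithin 1 (Set.Iio 1)) (nhds (f 1)) :=
    fun f hf => hf.continuousAt.tendsto.mono_left nhdsWithin_le_nhds
  have hbound : ∀ᶠ t in nhdsWithin 1 (Set.Iio 1),
      t ^ finrank ℝ E * (m * μ.real s)
        ≤ (∑ k ∈ Finset.range (finrank ℝ E + 1), t ^ k) * ∫ x in s, g x ∂μ := by
    filter_upwards [Ioo_mem_nhdsLT zero_lt_one] with t ht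
    exact hconv.pow_mul_le_geom_sum_mul_setIntegral μ hcomp g hg hm ht
  simpa using le_of_tendsto_of_tendsto (hlim _ (by fun_prop)) (hlim _ (by fun_prop)) hbound

theorem Convex.setIntegral_sq_mul_norm_sq_le_of_isGreatest {s : Set E} (hconv : Convex ℝ s)
    (hcomp : IsCompact s) {ℓ ℓh : E → ℝ} (g : E →ᵃ[ℝ] ℝ) (hℓg : Set.EqOn ℓ g s)
    (hℓ : ∀ x ∈ s, 0 ≤ ℓ x) {m : ℝ} (hm : IsGreatest (ℓ '' s) m) (hℓh : ∀ x ∈ s, ℓh x = m)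
    {F : Type*} [NormedAddCommGroup F] {u : E → F} {c : F} (hu : ∀ x ∈ s, u x = c) :
    ∫ x in s, ℓh x ^ 2 * ‖u x‖ ^ 2 ∂μ
      ≤ (finrank ℝ E + 1) * ∫ x in s, ℓ x * ℓh x * ‖u x‖ ^ 2 ∂μ := by
  have hmeas := hcomp.measurableSet
  have hm₀ : 0 ≤ m := by
    obtain ⟨x, hx, rfl⟩ := hm.1
    exact hℓ x hx
  have hkey := hconv.mul_measureReal_le_finrank_succ_mul_setIntegral μ hcomp g
    (fun x hx => hℓg hx ▸ hℓ x hx) (hℓg.image_eq ▸ hm)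
  have hleft : ∫ x in s, ℓh x ^ 2 * ‖u x‖ ^ 2 ∂μ = m * ‖c‖ ^ 2 * (m * μ.real s) := by
    rw [setIntegral_congr_fun hmeas (g := fun _ => m ^ 2 * ‖c‖ ^ 2)
      (fun x hx => by simp only [hℓh x hx, hu x hx]), setIntegral_const, smul_eq_mul]
    ring
  have hright : ∫ x in s, ℓ x * ℓh x * ‖u x‖ ^ 2 ∂μ = m * ‖c‖ ^ 2 * ∫ x in s, g x ∂μ := by
    rw [setIntegral_congr_fun hmeas (g := fun x => m * ‖c‖ ^ 2 * g x)
      (fun x hx => by simp only [hℓg hx, hℓh x hx, hu x hx]; ring), integral_const_mul]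
  rw [hleft, hright, mul_left_comm _ (m * ‖c‖ ^ 2)]
  exact mul_le_mul_of_nonneg_left hkey (by positivity)

end Haar

theorem discrete_weighted_estimate_general {ι : Type*} [Fintype ι]
    (Δ : ι → Set (EuclideanSpace ℝ (Fin 3)))
    (hdisj : Pairwise (Function.onFun Disjoint Δ))
    (htet : ∀ i, ∃ v : Fin 4 → EuclideanSpace ℝ (Fin 3),
      AffineIndependent ℝ v ∧ Δ i = convexHull ℝ (Set.range v))
    (ℓ : EuclideanSpace ℝ (Fin 3) → ℝ)
    (hℓaff : ∀ i, ∃ (a : EuclideanSpace ℝ (Fin 3)) (b : ℝ), ∀ x ∈ Δ i, ℓ x = ⟪a, x⟫ + b)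
    (hℓnonneg : ∀ i, ∀ x ∈ Δ i, 0 ≤ ℓ x)
    (m : ι → ℝ) (hm : ∀ i, IsGreatest (ℓ '' Δ i) (m i))
    (ℓh : EuclideanSpace ℝ (Fin 3) → ℝ) (hℓh : ∀ i, ∀ x ∈ Δ i, ℓh x = m i)
    (u : EuclideanSpace ℝ (Fin 3) → EuclideanSpace ℝ (Fin 3))
    (c : ι → EuclideanSpace ℝ (Fin 3)) (hu : ∀ i, ∀ x ∈ Δ i, u x = c i) :
    ∫ x in ⋃ i, Δ i, (ℓh x) ^ 2 * ‖u x‖ ^ 2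
      ≤ 4 * ∫ x in ⋃ i, Δ i, ℓ x * ℓh x * ‖u x‖ ^ 2 := by
  have hcc : ∀ i, Convex ℝ (Δ i) ∧ IsCompact (Δ i) := fun i => by
    obtain ⟨v, -, hv⟩ := htet i
    rw [hv]
    exact ⟨convex_convexHull ℝ _, (Set.finite_range v).isCompact_convexHull (𝕜 := ℝ)⟩
  choose a b hab using hℓaff
  let g (i : ι) : EuclideanSpace ℝ (Fin 3) →ᵃ[ℝ] ℝ :=
    (innerₛₗ ℝ (a i)).toAffineMap + AffineMap.const ℝ _ (b i)
  have hℓg : ∀ i, Set.EqOn ℓ (g i) (Δ i) := fun i x hx => by simpa [g] using hab i x hx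
  have hℓc : ∀ i, ContinuousOn ℓ (Δ i) := fun i =>
    (g i).continuous_of_finiteDimensional.continuousOn.congr (hℓg i)
  have hℓhc : ∀ i, ContinuousOn ℓh (Δ i) := fun i => continuousOn_const.congr (hℓh i)
  have huc : ∀ i, ContinuousOn u (Δ i) := fun i => continuousOn_const.congr (hu i)
  have hmeas : ∀ i, MeasurableSet (Δ i) := fun i => (hcc i).2.measurableSet
  have hint₁ : ∀ i, IntegrableOn (fun x => ℓh x ^ 2 * ‖u x‖ ^ 2) (Δ i) := fun i =>
    (((hℓhc i).pow 2).mul ((huc i).norm.pow 2)).integrableOn_compact (hcc i).2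
  have hint₂ : ∀ i, IntegrableOn (fun x => ℓ x * ℓh x * ‖u x‖ ^ 2) (Δ i) := fun i =>
    (((hℓc i).mul (hℓhc i)).mul ((huc i).norm.pow 2)).integrableOn_compact (hcc i).2
  rw [integral_iUnion_fintype hmeas hdisj hint₁, integral_iUnion_fintype hmeas hdisj hint₂,
    Finset.mul_sum]
  gcongr with i
  have hdim : (finrank ℝ (EuclideanSpace ℝ (Fin 3)) + 1 : ℝ) = 4 := by
    norm_num [finrank_euclideanSpace_fin]
  exact hdim ▸ (hcc i).1.setIntegral_sq_mul_norm_sq_le_of_isGreatest volume (hcc i).2 (g i)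
    (hℓg i) (hℓnonneg i) (hm i) (hℓh i) (hu i)

/-- Discrete weighted estimate (Lemma 4.7, `k = 0` case): let `Ω` be partitioned into finitely
many tetrahedra `Δ i`, let `ℓ ≥ 0` be affine on each tetrahedron, let `ℓh` be the piecewise
constant function equal to the maximum `m i` of `ℓ` on each piece, and let `u` be piecewise
constant. Then `∫_Ω ℓ_h² |u|² ≤ 4 ∫_Ω ℓ ℓ_h |u|²`. -/
theorem discrete_weighted_estimate {ι : Type*} [Fintype ι]
    (Δ : ι → Set (EuclideanSpace ℝ (Fin 3)))
    (hmeas : ∀ i, MeasurableSet (Δ i))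
    (hdisj : Pairwise (Function.onFun Disjoint Δ))
    (htet : ∀ i, ∃ v : Fin 4 → EuclideanSpace ℝ (Fin 3),
      AffineIndependent ℝ v ∧ Δ i = convexHull ℝ (Set.range v))
    (ℓ : EuclideanSpace ℝ (Fin 3) → ℝ)
    (hℓaff : ∀ i, ∃ (a : EuclideanSpace ℝ (Fin 3)) (b : ℝ), ∀ x ∈ Δ i, ℓ x = ⟪a, x⟫ + b)
    (hℓnonneg : ∀ i, ∀ x ∈ Δ i, 0 ≤ ℓ x)
    (m : ι → ℝ) (hm : ∀ i, IsGreatest (ℓ '' Δ i) (m i))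
    (ℓh : EuclideanSpace ℝ (Fin 3) → ℝ) (hℓh : ∀ i, ∀ x ∈ Δ i, ℓh x = m i)
    (u : EuclideanSpace ℝ (Fin 3) → EuclideanSpace ℝ (Fin 3))
    (c : ι → EuclideanSpace ℝ (Fin 3)) (hu : ∀ i, ∀ x ∈ Δ i, u x = c i) :
    ∫ x in ⋃ i, Δ i, (ℓh x) ^ 2 * ‖u x‖ ^ 2
      ≤ 4 * ∫ x in ⋃ i, Δ i, ℓ x * ℓh x * ‖u x‖ ^ 2 :=
  discrete_weighted_estimate_general Δ hdisj htet ℓ hℓaff hℓnonneg m hm ℓh hℓh u c hu
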